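/- arXiv:2310.16929 — 2 statements merged into one kernel-verified Lean document; each statement's English description precedes it below -/
import Mathlib

section
/- Let G be a graph on n vertices, 1 ≤ h ≤ k ≤ n, with L_h, L_k the Laplacians of F_h(G), F_k(G) and S the (k,h)-binomial (inclusion) matrix. If v is an eigenvector of L_h with eigenvalue λ, then Sv is a nonzero eigenvector of L_k with eigenvalue λ; hence the Laplacian spectrum of F_h(G) is contained in that of F_k(G). -/
open Finset
open scoped Classical

def tokenGraph {V : Type*} [DecidableEq V] (G : SimpleGraph V) (k : ℕ) :
    SimpleGraph {s : Finset V // s.card = k} where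
  Adj A B := ∃ a b, G.Adj a b ∧ A.1 \ B.1 = {a} ∧ B.1 \ A.1 = {b}
  symm := by
    constructor
    rintro A B ⟨a, b, h, h1, h2⟩
    exact ⟨b, a, h.symm, h2, h1⟩
  loopless := by
    constructor
    rintro A ⟨a, b, h, h1, h2⟩
    rw [Finset.sdiff_self] at h1
    exact Finset.singleton_ne_empty a h1.symm

/-!
Both claims rest on two properties of the inclusion matrix `S`.

*Commutation.* Twice the Laplacian of `F_k(G)` is `∑ (1 - P_{(a b)})` over the ordered edges
`(a, b)` of `G`, where `P_σ w = w ∘ σ` for a vertex permutation `σ` acting on `k`-sets: the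
transposition of an edge moves a token along it, and does nothing unless exactly one end is
occupied. As `S` commutes with every `P_σ`, it intertwines the Laplacians: `L_k S = S L_h`.

*Injectivity.* On functions on all subsets of `V`, the up operator `U` and its adjoint, the down
operator `D`, satisfy `DU - UD = n - 2|·|`. For `f` supported on `h`-sets this gives
`D U^(m+1) f = U^m ((UD + c) f)` with `c = (m+1)(n-2h-m) > 0` when `2h + m < n`, and `UD + c`
is injective since `⟨(UD + c) f, f⟩ = ‖Df‖² + c‖f‖²`. By induction `U^m` is injective on such `f`
for `2h + m ≤ n`, and `U^m = m! S` on them for `m = k - h`.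
-/

open Equiv Matrix

theorem eq_of_sdiff_eq_sdiff_of_sdiff_eq_sdiff {α : Type*} [GeneralizedBooleanAlgebra α]
    {a b c : α} (h₁ : a \ b = a \ c) (h₂ : b \ a = c \ a) : b = c := by
  rw [← sup_inf_sdiff b a, ← sup_inf_sdiff c a, inf_comm b, inf_comm c, ← sdiff_sdiff_right_self,
    h₁, sdiff_sdiff_right_self, h₂]

section TokenGraph

variable {V : Type*}

def tokenPerm (σ : Perm V) (k : ℕ) : Perm {s : Finset V // s.card = k} :=
  σ.finsetCongr.subtypeEquiv fun s => by simp

@[simp]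
theorem tokenPerm_apply_coe (σ : Perm V) {k : ℕ} (A : {s : Finset V // s.card = k}) :
    (tokenPerm σ k A).1 = A.1.map σ.toEmbedding := rfl

variable [DecidableEq V]

def inclusionMatrix (k h : ℕ) :
    Matrix {s : Finset V // s.card = k} {s : Finset V // s.card = h} ℝ :=
  Matrix.of fun A X => if X.1 ⊆ A.1 then 1 else 0

theorem Finset.map_swap_eq_self {A : Finset V} {a b : V} (h : a ∈ A ↔ b ∈ A) :
    A.map (swap a b).toEmbedding = A := by
  ext x
  rw [Finset.mem_map_equiv, symm_swap, swap_apply_def]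
  split_ifs with hxa hxb
  · subst hxa; exact h.symm
  · subst hxb; exact h
  · rfl

theorem Finset.sdiff_map_swap {A : Finset V} {a b : V} (ha : a ∈ A) (hb : b ∉ A) :
    A \ A.map (swap a b).toEmbedding = {a} := by
  ext x
  rw [Finset.mem_sdiff, Finset.mem_map_equiv, symm_swap, swap_apply_def, Finset.mem_singleton]
  split_ifs with hxa hxb <;> grind

theorem Finset.map_swap_sdiff {A : Finset V} {a b : V} (ha : a ∈ A) (hb : b ∉ A) :
    A.map (swap a b).toEmbedding \ A = {b} := by
  ext x
  rw [Finset.mem_sdiff, Finset.mem_map_equiv, symm_swap, swap_apply_def, Finset.mem_singleton]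
  split_ifs with hxa hxb <;> grind

theorem tokenPerm_swap_of_mem_iff {k : ℕ} {A : {s : Finset V // s.card = k}} {a b : V}
    (h : a ∈ A.1 ↔ b ∈ A.1) : tokenPerm (swap a b) k A = A :=
  Subtype.ext (Finset.map_swap_eq_self h)

theorem tokenGraph_adj_tokenPerm_swap (G : SimpleGraph V) {k : ℕ}
    {A : {s : Finset V // s.card = k}} {a b : V} (hab : G.Adj a b) (ha : a ∈ A.1) (hb : b ∉ A.1) :
    (tokenGraph G k).Adj A (tokenPerm (swap a b) k A) :=
  ⟨a, b, hab, Finset.sdiff_map_swap ha hb, Finset.map_swap_sdiff ha hb⟩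

variable [Fintype V] (G : SimpleGraph V)

theorem inclusionMatrix_mulVec_apply {k h : ℕ} (v : {s : Finset V // s.card = h} → ℝ)
    (A : {s : Finset V // s.card = k}) :
    (inclusionMatrix k h *ᵥ v) A = ∑ X, if X.1 ⊆ A.1 then v X else 0 := by
  simp [inclusionMatrix, Matrix.mulVec, dotProduct]

theorem inclusionMatrix_mulVec_tokenPerm {k h : ℕ} (σ : Perm V)
    (v : {s : Finset V // s.card = h} → ℝ) (A : {s : Finset V // s.card = k}) :
    (inclusionMatrix k h *ᵥ v) (tokenPerm σ k A) =
      (inclusionMatrix k h *ᵥ (v ∘ tokenPerm σ h)) A := by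
  simp only [inclusionMatrix_mulVec_apply]
  rw [← Equiv.sum_comp (tokenPerm σ h)]
  simp [Finset.map_subset_map]

theorem sum_neighborFinset_tokenGraph {k : ℕ} {M : Type*} [AddCommMonoid M]
    (A : {s : Finset V // s.card = k}) (F : {s : Finset V // s.card = k} → M) :
    ∑ B ∈ (tokenGraph G k).neighborFinset A, F B =
      ∑ d : G.Dart with d.fst ∈ A.1 ∧ d.snd ∉ A.1, F (tokenPerm (swap d.fst d.snd) k A) := by
  symm
  refine Finset.sum_nbij (fun d => tokenPerm (swap d.fst d.snd) k A) ?_ ?_ ?_ fun _ _ => rfl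
  · intro d hd
    simp only [Finset.mem_filter, Finset.mem_univ, true_and] at hd
    simpa using tokenGraph_adj_tokenPerm_swap G d.adj hd.1 hd.2
  · intro d hd d' hd' hdd'
    simp only [Finset.coe_filter, Finset.mem_univ, true_and, Set.mem_ofPred_eq] at hd hd'
    have hsets : A.1.map (swap d.fst d.snd).toEmbedding =
        A.1.map (swap d'.fst d'.snd).toEmbedding := congrArg Subtype.val hdd'
    have hfst : {d.fst} = ({d'.fst} : Finset V) := by
      rw [← Finset.sdiff_map_swap hd.1 hd.2, ← Finset.sdiff_map_swap hd'.1 hd'.2, hsets]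
    have hsnd : {d.snd} = ({d'.snd} : Finset V) := by
      rw [← Finset.map_swap_sdiff hd.1 hd.2, ← Finset.map_swap_sdiff hd'.1 hd'.2, hsets]
    exact SimpleGraph.Dart.toProd_injective
      (Prod.ext (Finset.singleton_injective hfst) (Finset.singleton_injective hsnd))
  · rintro B hB
    obtain ⟨a, b, hab, hAB, hBA⟩ := (SimpleGraph.mem_neighborFinset _ _ _).mp hB
    have ha : a ∈ A.1 := (Finset.mem_sdiff.mp (hAB ▸ Finset.mem_singleton_self a)).1
    have hb : b ∉ A.1 := (Finset.mem_sdiff.mp (hBA ▸ Finset.mem_singleton_self b)).2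
    refine ⟨⟨(a, b), hab⟩, by simp [ha, hb], Subtype.ext ?_⟩
    refine eq_of_sdiff_eq_sdiff_of_sdiff_eq_sdiff (a := A.1) ?_ ?_ <;>
      simp only [tokenPerm_apply_coe]
    · rw [Finset.sdiff_map_swap ha hb, hAB]
    · rw [Finset.map_swap_sdiff ha hb, hBA]

theorem two_mul_lapMatrix_tokenGraph_mulVec_apply {k : ℕ} (w : {s : Finset V // s.card = k} → ℝ)
    (A : {s : Finset V // s.card = k}) :
    2 * ((tokenGraph G k).lapMatrix ℝ *ᵥ w) A =
      ∑ d : G.Dart, (w A - w (tokenPerm (swap d.fst d.snd) k A)) := by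
  set T : G.Dart → ℝ := fun d => w A - w (tokenPerm (swap d.fst d.snd) k A)
  set P : G.Dart → ℝ := fun d => if d.fst ∈ A.1 ∧ d.snd ∉ A.1 then T d else 0
  have hT : ∀ d, T d = P d + P d.symm := by
    intro d
    have hsymm : T d.symm = T d := by simp [T, Equiv.swap_comm]
    have hfix : (d.fst ∈ A.1 ↔ d.snd ∈ A.1) → T d = 0 := fun h => by
      simp only [T, tokenPerm_swap_of_mem_iff h, sub_self]
    by_cases h₁ : d.fst ∈ A.1 <;> by_cases h₂ : d.snd ∈ A.1 <;> simp [P, h₁, h₂, hsymm] <;>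
      exact hfix (by tauto)
  have hP : ∑ d, P d = ((tokenGraph G k).lapMatrix ℝ *ᵥ w) A := by
    rw [SimpleGraph.lapMatrix_mulVec_apply, ← SimpleGraph.card_neighborFinset_eq_degree,
      ← nsmul_eq_mul, ← Finset.sum_const, ← Finset.sum_sub_distrib,
      sum_neighborFinset_tokenGraph, Finset.sum_filter]
  calc 2 * ((tokenGraph G k).lapMatrix ℝ *ᵥ w) A = ∑ d, P d + ∑ d : G.Dart, P d.symm := by
        have hsymm : ∑ d : G.Dart, P d.symm = ∑ d, P d :=
          Equiv.sum_comp SimpleGraph.Dart.symm_involutive.toPerm P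
        rw [hsymm, hP]; ring
    _ = ∑ d, T d := by rw [← Finset.sum_add_distrib]; simp only [hT]

theorem lapMatrix_tokenGraph_mulVec_inclusionMatrix_mulVec {k h : ℕ}
    (v : {s : Finset V // s.card = h} → ℝ) :
    (tokenGraph G k).lapMatrix ℝ *ᵥ (inclusionMatrix k h *ᵥ v) =
      inclusionMatrix k h *ᵥ ((tokenGraph G h).lapMatrix ℝ *ᵥ v) := by
  funext A
  refine mul_left_cancel₀ (two_ne_zero (α := ℝ)) ?_
  calc 2 * ((tokenGraph G k).lapMatrix ℝ *ᵥ (inclusionMatrix k h *ᵥ v)) A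
      = ∑ d : G.Dart, ∑ X : {s : Finset V // s.card = h},
          if X.1 ⊆ A.1 then v X - v (tokenPerm (swap d.fst d.snd) h X) else 0 := by
        rw [two_mul_lapMatrix_tokenGraph_mulVec_apply]
        refine Finset.sum_congr rfl fun d _ => ?_
        rw [inclusionMatrix_mulVec_tokenPerm, inclusionMatrix_mulVec_apply,
          inclusionMatrix_mulVec_apply, ← Finset.sum_sub_distrib]
        refine Finset.sum_congr rfl fun X _ => ?_
        split_ifs <;> simp
    _ = ∑ X : {s : Finset V // s.card = h},
          if X.1 ⊆ A.1 then 2 * ((tokenGraph G h).lapMatrix ℝ *ᵥ v) X else 0 := by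
        rw [Finset.sum_comm]
        refine Finset.sum_congr rfl fun X _ => ?_
        rw [two_mul_lapMatrix_tokenGraph_mulVec_apply]
        split_ifs <;> simp
    _ = 2 * (inclusionMatrix k h *ᵥ ((tokenGraph G h).lapMatrix ℝ *ᵥ v)) A := by
        simp only [inclusionMatrix_mulVec_apply, Finset.mul_sum, mul_ite, mul_zero]

end TokenGraph

section UpDown

variable {V : Type*} {h : ℕ} {f : Finset V → ℝ}

def IsHomogeneous (h : ℕ) (f : Finset V → ℝ) : Prop :=
  ∀ A : Finset V, A.card ≠ h → f A = 0

theorem IsHomogeneous.add {g : Finset V → ℝ} (hf : IsHomogeneous h f) (hg : IsHomogeneous h g) :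
    IsHomogeneous h (f + g) := fun A hA => by simp [hf A hA, hg A hA]

theorem IsHomogeneous.smul (c : ℝ) (hf : IsHomogeneous h f) : IsHomogeneous h (c • f) :=
  fun A hA => by simp [hf A hA]

variable [DecidableEq V]

variable (V) in
def upOperator : Module.End ℝ (Finset V → ℝ) where
  toFun f A := ∑ a ∈ A, f (A.erase a)
  map_add' f g := by ext A; simp [Finset.sum_add_distrib]
  map_smul' c f := by ext A; simp [Finset.mul_sum]

@[simp]
theorem upOperator_apply (f : Finset V → ℝ) (A : Finset V) :
    upOperator V f A = ∑ a ∈ A, f (A.erase a) := rfl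

theorem Finset.sum_sum_powerset_erase {M : Type*} [AddCommMonoid M] (A : Finset V)
    (g : Finset V → M) :
    ∑ a ∈ A, ∑ X ∈ (A.erase a).powerset, g X = ∑ X ∈ A.powerset, (A.card - X.card) • g X := by
  have hpowerset : ∀ a, (A.erase a).powerset = {X ∈ A.powerset | a ∉ X} := fun a => by
    ext X; simp [Finset.subset_erase]
  simp_rw [hpowerset, Finset.sum_filter]
  rw [Finset.sum_comm]
  refine Finset.sum_congr rfl fun X hX => ?_
  rw [← Finset.sum_filter, Finset.sum_const, ← Finset.sdiff_eq_filter,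
    Finset.card_sdiff_of_subset (Finset.mem_powerset.mp hX)]

theorem upOperator_pow_apply (m : ℕ) (f : Finset V → ℝ) (A : Finset V) :
    (upOperator V ^ m) f A = m.factorial * ∑ X ∈ A.powerset with X.card + m = A.card, f X := by
  induction m generalizing A with
  | zero =>
    have hA : {X ∈ A.powerset | X.card + 0 = A.card} = {A} := by
      ext X
      simp only [Finset.mem_filter, Finset.mem_powerset, add_zero, Finset.mem_singleton]
      exact ⟨fun h => Finset.eq_of_subset_of_card_le h.1 h.2.ge, fun h => h ▸ ⟨subset_rfl, rfl⟩⟩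
    rw [pow_zero, Module.End.one_apply, Nat.factorial_zero, Nat.cast_one, one_mul, hA,
      Finset.sum_singleton]
  | succ m ih =>
    rw [pow_succ', Module.End.mul_apply, upOperator_apply]
    have herase : ∀ a ∈ A, (upOperator V ^ m) f (A.erase a) =
        m.factorial * ∑ X ∈ (A.erase a).powerset, if X.card + m + 1 = A.card then f X else 0 := by
      intro a ha
      have := Finset.card_pos.mpr ⟨a, ha⟩
      rw [ih, Finset.sum_filter, Finset.card_erase_of_mem ha]
      exact congrArg _ (Finset.sum_congr rfl fun X _ => if_congr (by omega) rfl rfl)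
    rw [Finset.sum_congr rfl herase, ← Finset.mul_sum, Finset.sum_sum_powerset_erase,
      Finset.sum_filter, Nat.factorial_succ, Nat.cast_mul, mul_comm ((m + 1 : ℕ) : ℝ), mul_assoc]
    congr 1
    rw [Finset.mul_sum]
    refine Finset.sum_congr rfl fun X _ => ?_
    by_cases hX : X.card + m + 1 = A.card
    · rw [if_pos hX, if_pos (by omega), nsmul_eq_mul, show A.card - X.card = m + 1 by omega]
    · rw [if_neg hX, if_neg (by omega), smul_zero, mul_zero]

theorem isHomogeneous_upOperator (hf : IsHomogeneous h f) :
    IsHomogeneous (h + 1) (upOperator V f) := by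
  intro A hA
  refine Finset.sum_eq_zero fun a ha => hf _ ?_
  rw [Finset.card_erase_of_mem ha]
  have := Finset.card_pos.mpr ⟨a, ha⟩
  omega

theorem isHomogeneous_upOperator_pow (hf : IsHomogeneous h f) (m : ℕ) :
    IsHomogeneous (h + m) ((upOperator V ^ m) f) := by
  induction m with
  | zero => simpa using hf
  | succ m ih =>
    rw [pow_succ', Module.End.mul_apply, ← add_assoc]
    exact isHomogeneous_upOperator ih

variable [Fintype V]

variable (V) in
def downOperator : Module.End ℝ (Finset V → ℝ) where
  toFun f B := ∑ b ∈ Bᶜ, f (insert b B)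
  map_add' f g := by ext B; simp [Finset.sum_add_distrib]
  map_smul' c f := by ext B; simp [Finset.mul_sum]

@[simp]
theorem downOperator_apply (f : Finset V → ℝ) (B : Finset V) :
    downOperator V f B = ∑ b ∈ Bᶜ, f (insert b B) := rfl

theorem downOperator_upOperator_apply (f : Finset V → ℝ) (B : Finset V) :
    downOperator V (upOperator V f) B =
      upOperator V (downOperator V f) B + ((Fintype.card V : ℝ) - 2 * B.card) * f B := by
  have hdown : downOperator V (upOperator V f) B =
      (Fintype.card V - B.card) * f B + ∑ b ∈ Bᶜ, ∑ a ∈ B, f (insert b (B.erase a)) := by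
    rw [← Nat.cast_sub B.card_le_univ, ← Finset.card_compl, ← nsmul_eq_mul, ← Finset.sum_const,
      ← Finset.sum_add_distrib]
    refine Finset.sum_congr rfl fun b hb => ?_
    have hb : b ∉ B := Finset.mem_compl.mp hb
    rw [upOperator_apply, Finset.sum_insert hb, Finset.erase_insert hb]
    congr 1
    refine Finset.sum_congr rfl fun a ha => congrArg f (Finset.erase_insert_of_ne ?_)
    rintro rfl; exact hb ha
  have hup : upOperator V (downOperator V f) B =
      B.card * f B + ∑ a ∈ B, ∑ b ∈ Bᶜ, f (insert b (B.erase a)) := by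
    rw [← nsmul_eq_mul, ← Finset.sum_const, ← Finset.sum_add_distrib]
    refine Finset.sum_congr rfl fun a ha => ?_
    rw [downOperator_apply, Finset.compl_erase, Finset.sum_insert (by simpa using ha),
      Finset.insert_erase ha]
  rw [hdown, hup, Finset.sum_comm]
  ring

theorem sum_upOperator_mul (f g : Finset V → ℝ) :
    ∑ A, upOperator V f A * g A = ∑ B, f B * downOperator V g B := by
  simp only [upOperator_apply, downOperator_apply, Finset.sum_mul, Finset.mul_sum]
  have hA : ∑ A : Finset V, ∑ a ∈ A, f (A.erase a) * g A =
      ∑ a, ∑ A with a ∈ A, f (A.erase a) * g A := Finset.sum_comm' (by simp)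
  have hB : ∑ B : Finset V, ∑ b ∈ Bᶜ, f B * g (insert b B) =
      ∑ b, ∑ B with b ∉ B, f B * g (insert b B) := Finset.sum_comm' (by simp)
  rw [hA, hB]
  refine Finset.sum_congr rfl fun a _ => ?_
  refine Finset.sum_nbij' (fun A => A.erase a) (insert a) ?_ ?_ ?_ ?_ ?_ <;> simp +contextual

theorem isHomogeneous_upOperator_downOperator (hf : IsHomogeneous h f) :
    IsHomogeneous h (upOperator V (downOperator V f)) := by
  intro A hA
  refine Finset.sum_eq_zero fun a ha => Finset.sum_eq_zero fun b hb => hf _ ?_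
  rwa [Finset.card_insert_of_notMem (Finset.mem_compl.mp hb), Finset.card_erase_add_one ha]

theorem IsHomogeneous.downOperator_upOperator (hf : IsHomogeneous h f) :
    downOperator V (upOperator V f) =
      upOperator V (downOperator V f) + ((Fintype.card V : ℝ) - 2 * h) • f := by
  ext B
  rw [downOperator_upOperator_apply, Pi.add_apply, Pi.smul_apply, smul_eq_mul]
  by_cases hB : B.card = h
  · rw [hB]
  · rw [hf B hB, mul_zero, mul_zero]

theorem IsHomogeneous.downOperator_upOperator_pow (hf : IsHomogeneous h f) (m : ℕ) :
    downOperator V ((upOperator V ^ (m + 1)) f) =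
      (upOperator V ^ (m + 1)) (downOperator V f) +
        (((m : ℝ) + 1) * ((Fintype.card V : ℝ) - 2 * h - m)) • (upOperator V ^ m) f := by
  induction m with
  | zero => simpa using hf.downOperator_upOperator
  | succ m ih =>
    rw [pow_succ' _ (m + 1), Module.End.mul_apply,
      (isHomogeneous_upOperator_pow hf (m + 1)).downOperator_upOperator, ih]
    ext B
    simp only [pow_succ', Module.End.mul_apply, map_add, map_smul, Pi.add_apply, Pi.smul_apply,
      smul_eq_mul]
    push_cast
    ring

theorem eq_zero_of_upOperator_downOperator_add_smul_eq_zero {c : ℝ} (hc : 0 < c)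
    (hzero : upOperator V (downOperator V f) + c • f = 0) : f = 0 := by
  have hsum : ∑ B, downOperator V f B ^ 2 + c * ∑ A, f A ^ 2 = 0 := by
    have := congrArg (fun g => ∑ A, g A * f A) hzero
    simp only [Pi.add_apply, Pi.smul_apply, smul_eq_mul, add_mul, Finset.sum_add_distrib,
      sum_upOperator_mul, Pi.zero_apply, zero_mul, Finset.sum_const_zero] at this
    rw [← this, Finset.mul_sum]
    congr 1 <;> refine Finset.sum_congr rfl fun _ _ => by ring
  have hsq : ∑ A, f A ^ 2 = 0 := by
    have h₁ : 0 ≤ ∑ B, downOperator V f B ^ 2 := Finset.sum_nonneg fun _ _ => sq_nonneg _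
    have h₂ : 0 ≤ ∑ A, f A ^ 2 := Finset.sum_nonneg fun _ _ => sq_nonneg _
    nlinarith
  funext A
  exact pow_eq_zero_iff two_ne_zero |>.mp <|
    (Finset.sum_eq_zero_iff_of_nonneg fun _ _ => sq_nonneg _).mp hsq A (Finset.mem_univ A)

theorem IsHomogeneous.eq_zero_of_upOperator_pow_eq_zero {m : ℕ} (hf : IsHomogeneous h f)
    (hm : 2 * h + m ≤ Fintype.card V)
    (hzero : (upOperator V ^ m) f = 0) : f = 0 := by
  induction m generalizing f with
  | zero => simpa using hzero
  | succ m ih =>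
    have hc : (0 : ℝ) < ((m : ℝ) + 1) * ((Fintype.card V : ℝ) - 2 * h - m) := by
      have : ((2 * h + (m + 1) : ℕ) : ℝ) ≤ Fintype.card V := by exact_mod_cast hm
      push_cast at this
      nlinarith
    refine eq_zero_of_upOperator_downOperator_add_smul_eq_zero hc ?_
    refine ih ((isHomogeneous_upOperator_downOperator hf).add (hf.smul _)) (by omega) ?_
    have hdown := congrArg (downOperator V) hzero
    rw [hf.downOperator_upOperator_pow, map_zero] at hdown
    rwa [map_add, map_smul, ← Module.End.mul_apply, ← pow_succ]

end UpDown

section Injectivity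

variable {V : Type*} [DecidableEq V] [Fintype V]

theorem inclusionMatrix_mulVec_apply_eq_sum_powersetCard {k h : ℕ}
    (v : {s : Finset V // s.card = h} → ℝ) (A : {s : Finset V // s.card = k}) :
    (inclusionMatrix k h *ᵥ v) A =
      ∑ X ∈ A.1.powersetCard h, Function.extend Subtype.val v 0 X := by
  rw [inclusionMatrix_mulVec_apply, ← Finset.sum_filter]
  refine Finset.sum_nbij Subtype.val ?_ Subtype.val_injective.injOn ?_ ?_
  · intro X hX
    simpa [Finset.mem_powersetCard, X.2] using hX
  · intro X hX
    rw [Finset.mem_coe, Finset.mem_powersetCard] at hX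
    exact ⟨⟨X, hX.2⟩, by simpa using hX.1, rfl⟩
  · intro X _
    exact (Subtype.val_injective.extend_apply v 0 X).symm

theorem inclusionMatrix_mulVec_eq_zero_iff {h k : ℕ} (hhk : h ≤ k) (hkn : k + h ≤ Fintype.card V)
    {v : {s : Finset V // s.card = h} → ℝ} : inclusionMatrix k h *ᵥ v = 0 ↔ v = 0 := by
  refine ⟨fun hv => ?_, fun hv => hv ▸ Matrix.mulVec_zero _⟩
  obtain ⟨m, rfl⟩ := Nat.exists_eq_add_of_le hhk
  set f : Finset V → ℝ := Function.extend Subtype.val v 0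
  have hf : IsHomogeneous h f := fun X hX =>
    Function.extend_apply' _ _ _ (by rintro ⟨Y, rfl⟩; exact hX Y.2)
  have hUf : (upOperator V ^ m) f = 0 := by
    funext A
    by_cases hA : A.card = h + m
    · have hlevel : {X ∈ A.powerset | X.card + m = A.card} = A.powersetCard h := by
        rw [Finset.powersetCard_eq_filter, hA]; simp only [add_left_inj]
      rw [upOperator_pow_apply, hlevel,
        ← inclusionMatrix_mulVec_apply_eq_sum_powersetCard v ⟨A, hA⟩, hv, Pi.zero_apply, mul_zero,
        Pi.zero_apply]
    · exact isHomogeneous_upOperator_pow hf m A hA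
  funext X
  have hzero := hf.eq_zero_of_upOperator_pow_eq_zero (by omega) hUf
  simpa [f, Subtype.val_injective.extend_apply] using congrFun hzero X.1

end Injectivity

theorem token_laplacian_eigenvector_lift_general (n h k : ℕ) (G : SimpleGraph (Fin n))
    (hhk : h ≤ k) (hkn : k ≤ n - h)
    (S : Matrix {s : Finset (Fin n) // s.card = k} {s : Finset (Fin n) // s.card = h} ℝ)
    (hS : ∀ A X, S A X = if X.1 ⊆ A.1 then 1 else 0) :
    (∀ (lam : ℝ) (v : {s : Finset (Fin n) // s.card = h} → ℝ), v ≠ 0 →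
      ((tokenGraph G h).lapMatrix ℝ).mulVec v = lam • v →
      S.mulVec v ≠ 0 ∧
        ((tokenGraph G k).lapMatrix ℝ).mulVec (S.mulVec v) = lam • S.mulVec v) ∧
    (∀ lam : ℝ,
      (∃ v : {s : Finset (Fin n) // s.card = h} → ℝ, v ≠ 0 ∧
        ((tokenGraph G h).lapMatrix ℝ).mulVec v = lam • v) →
      ∃ w : {s : Finset (Fin n) // s.card = k} → ℝ, w ≠ 0 ∧
        ((tokenGraph G k).lapMatrix ℝ).mulVec w = lam • w) := by
  obtain rfl : S = inclusionMatrix k h := Matrix.ext fun A X => by rw [hS]; rfl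
  have hcard : k + h ≤ Fintype.card (Fin n) := by rw [Fintype.card_fin]; omega
  have lift : ∀ (lam : ℝ) (v : {s : Finset (Fin n) // s.card = h} → ℝ), v ≠ 0 →
      (tokenGraph G h).lapMatrix ℝ *ᵥ v = lam • v →
      inclusionMatrix k h *ᵥ v ≠ 0 ∧
        (tokenGraph G k).lapMatrix ℝ *ᵥ (inclusionMatrix k h *ᵥ v) =
          lam • (inclusionMatrix k h *ᵥ v) := fun lam v hv hev =>
    ⟨(inclusionMatrix_mulVec_eq_zero_iff hhk hcard).not.mpr hv, by
      rw [lapMatrix_tokenGraph_mulVec_inclusionMatrix_mulVec, hev, Matrix.mulVec_smul]⟩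
  exact ⟨lift, fun lam ⟨v, hv, hev⟩ => ⟨_, lift lam v hv hev⟩⟩

theorem token_laplacian_eigenvector_lift (n h k : ℕ) (G : SimpleGraph (Fin n))
    (hh : 1 ≤ h) (hhk : h ≤ k) (hkn : k ≤ n - h)
    (S : Matrix {s : Finset (Fin n) // s.card = k} {s : Finset (Fin n) // s.card = h} ℝ)
    (hS : ∀ A X, S A X = if X.1 ⊆ A.1 then 1 else 0) :
    (∀ (lam : ℝ) (v : {s : Finset (Fin n) // s.card = h} → ℝ), v ≠ 0 →
      ((tokenGraph G h).lapMatrix ℝ).mulVec v = lam • v →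
      S.mulVec v ≠ 0 ∧
        ((tokenGraph G k).lapMatrix ℝ).mulVec (S.mulVec v) = lam • S.mulVec v) ∧
    (∀ lam : ℝ,
      (∃ v : {s : Finset (Fin n) // s.card = h} → ℝ, v ≠ 0 ∧
        ((tokenGraph G h).lapMatrix ℝ).mulVec v = lam • v) →
      ∃ w : {s : Finset (Fin n) // s.card = k} → ℝ, w ≠ 0 ∧
        ((tokenGraph G k).lapMatrix ℝ).mulVec w = lam • w) :=
  token_laplacian_eigenvector_lift_general n h k G hhk hkn S hS
end

section
/- The 2-token graph of the cycle C_n (n ≥ 3) has spectral radius 4cos(π/n), equal to twice the spectral radius of the path P_{n−1}. -/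
open Finset
open scoped Classical

noncomputable def specRad {m : Type*} [Fintype m] (M : Matrix m m ℝ) : ℝ :=
  sSup {μ : ℝ | ∃ v : m → ℝ, v ≠ 0 ∧ M.mulVec v = μ • v}

/-!
Both spectral radii are read off positive eigenvectors: if `M ≥ 0` has an eigenvector `f > 0` for
`r`, comparing any eigenvector `v` for `μ` with `c f` at a coordinate where `|v i| / f i` is maximal
gives `|μ| ≤ r`. Put `w d = sin (π d / n)` on `ℤ/n`; it vanishes only at `0` and satisfies
`w (d - 1) + w (d + 1) = 2 cos (π / n) w d` for `d ≠ 0`. Deleting the vertex `0` from `C_n` leaves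
`P_{n-1}`, and since `w 0 = 0` the restriction of `w` is a positive eigenvector of `P_{n-1}` for
`2 cos (π / n)`. On `F_2(C_n)`, the function `{x, y} ↦ w (y - x) + w (x - y)` is a positive
eigenvector for `4 cos (π / n)`: each of the four token moves shifts `y - x` by `±1`, and a move
blocked by the other token would land on a difference `0`, where `w` vanishes anyway.
-/

open Real SimpleGraph Matrix

section PositiveEigenvector

variable {m : Type*} [Fintype m] {M : Matrix m m ℝ} {f : m → ℝ} {r : ℝ}

theorem abs_le_of_pos_eigenvector (hM : ∀ i j, 0 ≤ M i j) (hf : ∀ i, 0 < f i)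
    (hMf : M *ᵥ f = r • f) {μ : ℝ} {v : m → ℝ} (hv : v ≠ 0) (hMv : M *ᵥ v = μ • v) :
    |μ| ≤ r := by
  obtain ⟨j, hj⟩ := Function.ne_iff.mp hv
  obtain ⟨i, -, hi⟩ := exists_max_image univ (fun i => |v i| / f i) ⟨j, mem_univ j⟩
  set c := |v i| / f i
  have hvc : ∀ k, |v k| ≤ c * f k := fun k => (div_le_iff₀ (hf k)).mp (hi k (mem_univ k))
  have hc : 0 < c := (div_pos (abs_pos.mpr hj) (hf j)).trans_le (hi j (mem_univ j))
  have hvi : |v i| = c * f i := (div_mul_cancel₀ _ (hf i).ne').symm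
  have key : |μ| * (c * f i) ≤ r * (c * f i) :=
    calc |μ| * (c * f i) = |(M *ᵥ v) i| := by rw [hMv, ← hvi]; simp [abs_mul]
      _ ≤ ∑ k, M i k * |v k| := by
          simpa [mulVec, dotProduct, abs_mul, abs_of_nonneg (hM i _)] using
            abs_sum_le_sum_abs (fun k => M i k * v k) univ
      _ ≤ ∑ k, M i k * (c * f k) := by gcongr with k; exacts [hM i k, hvc k]
      _ = c * (M *ᵥ f) i := by
          simp only [mulVec, dotProduct, mul_sum]; exact sum_congr rfl fun k _ => by ring
      _ = r * (c * f i) := by rw [hMf, Pi.smul_apply, smul_eq_mul]; ring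
  exact le_of_mul_le_mul_right key (mul_pos hc (hf i))

theorem specRad_eq_of_pos_eigenvector [Nonempty m] (hM : ∀ i j, 0 ≤ M i j) (hf : ∀ i, 0 < f i)
    (hMf : M *ᵥ f = r • f) : specRad M = r := by
  refine IsGreatest.csSup_eq ⟨⟨f, fun h => ?_, hMf⟩, ?_⟩
  · exact (hf (Classical.arbitrary m)).ne' (congrFun h _)
  · rintro μ ⟨v, hv, hMv⟩
    exact (le_abs_self μ).trans (abs_le_of_pos_eigenvector hM hf hMf hv hMv)

end PositiveEigenvector

theorem SimpleGraph.adjMatrix_nonneg {V : Type*} (G : SimpleGraph V) [DecidableRel G.Adj] (i j : V) :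
    0 ≤ G.adjMatrix ℝ i j := by
  rw [adjMatrix_apply]; split_ifs <;> norm_num

section TokenGraph

variable {V : Type*} [DecidableEq V] {G : SimpleGraph V} {k : ℕ}

theorem Finset.card_insert_erase_of_mem_of_notMem {s : Finset V} {a b : V} (ha : a ∈ s)
    (hb : b ∉ s) : (insert b (s.erase a)).card = s.card := by
  rw [card_insert_of_notMem fun h => hb (mem_of_mem_erase h), card_erase_add_one ha]

theorem tokenGraph_adj_iff {A B : {s : Finset V // s.card = k}} :
    (tokenGraph G k).Adj A B ↔
      ∃ a ∈ A.1, ∃ b ∉ A.1, G.Adj a b ∧ B.1 = insert b (A.1.erase a) := by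
  constructor
  · rintro ⟨a, b, hab, hAB, hBA⟩
    have ha := Finset.ext_iff.mp hAB
    have hb := Finset.ext_iff.mp hBA
    simp only [mem_sdiff, mem_singleton] at ha hb
    refine ⟨a, ((ha a).mpr rfl).1, b, ((hb b).mpr rfl).2, hab, ?_⟩
    ext x
    simp only [mem_insert, mem_erase]
    grind
  · rintro ⟨a, ha, b, hb, hab, hB⟩
    refine ⟨a, b, hab, ?_, ?_⟩ <;> ext x <;>
      simp only [hB, mem_sdiff, mem_insert, mem_erase, mem_singleton] <;> grind

theorem tokenGraph_adjMatrix_mulVec_apply [Fintype V] [DecidableRel G.Adj] (g : Finset V → ℝ)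
    (A : {s : Finset V // s.card = k}) :
    ((tokenGraph G k).adjMatrix ℝ *ᵥ fun B => g B.1) A =
      ∑ a ∈ A.1, ∑ b ∈ G.neighborFinset a with b ∉ A.1, g (insert b (A.1.erase a)) := by
  rw [adjMatrix_mulVec_apply, sum_sigma']
  symm
  refine sum_bij (fun p hp => ⟨insert p.2 (A.1.erase p.1), ?_⟩) ?_ ?_ ?_ (fun _ _ => rfl)
  · simp only [mem_sigma, mem_filter, mem_neighborFinset] at hp
    rw [card_insert_erase_of_mem_of_notMem hp.1 hp.2.2, A.2]
  · rintro ⟨a, b⟩ hp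
    simp only [mem_sigma, mem_filter, mem_neighborFinset] at hp
    rw [mem_neighborFinset, tokenGraph_adj_iff]
    exact ⟨a, hp.1, b, hp.2.2, hp.2.1, rfl⟩
  · rintro ⟨a, b⟩ hp ⟨a', b'⟩ hp' h
    simp only [mem_sigma, mem_filter, mem_neighborFinset] at hp hp'
    have h := Finset.ext_iff.mp (congrArg Subtype.val h)
    simp only [mem_insert, mem_erase] at h
    obtain rfl : b = b' := by grind
    obtain rfl : a = a' := by grind
    rfl
  · intro B hB
    rw [mem_neighborFinset, tokenGraph_adj_iff] at hB
    obtain ⟨a, ha, b, hb, hab, hB⟩ := hB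
    exact ⟨⟨a, b⟩, by simp [ha, hb, hab], Subtype.ext hB.symm⟩

theorem tokenGraph_two_adjMatrix_mulVec_apply [Fintype V] [DecidableRel G.Adj]
    {g : Finset V → ℝ} (hg : ∀ x, g {x} = 0) {A : {s : Finset V // s.card = 2}} {i j : V}
    (hij : i ≠ j) (hA : A.1 = {i, j}) :
    ((tokenGraph G 2).adjMatrix ℝ *ᵥ fun B => g B.1) A =
      ∑ b ∈ G.neighborFinset i, g {b, j} + ∑ b ∈ G.neighborFinset j, g {b, i} := by
  have hmove : ∀ {a c : V}, a ≠ c →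
      ∑ b ∈ G.neighborFinset a with b ∉ ({a, c} : Finset V),
          g (insert b (({a, c} : Finset V).erase a)) =
        ∑ b ∈ G.neighborFinset a, g {b, c} := by
    intro a c hac
    rw [erase_insert (by simpa using hac)]
    refine sum_filter_of_ne fun b hb hgb => ?_
    rw [mem_neighborFinset] at hb
    simp only [mem_insert, mem_singleton, not_or]
    refine ⟨hb.ne', fun hbc => hgb ?_⟩
    rw [hbc, pair_eq_singleton, hg]
  rw [tokenGraph_adjMatrix_mulVec_apply, hA, sum_pair hij, hmove hij, pair_comm, hmove hij.symm]

end TokenGraph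

section PairPotential

variable {α : Type*} [AddGroup α] {w : α → ℝ}

def pairPotential (w : α → ℝ) (s : Finset α) : ℝ := ∑ x ∈ s, ∑ y ∈ s, w (y - x)

theorem pairPotential_singleton (hw : w 0 = 0) (x : α) : pairPotential w {x} = 0 := by
  simp [pairPotential, hw]

theorem pairPotential_pair [DecidableEq α] (hw : w 0 = 0) (x y : α) :
    pairPotential w {x, y} = w (y - x) + w (x - y) := by
  rcases eq_or_ne x y with rfl | hxy
  · simp [pairPotential_singleton hw, hw]
  · simp [pairPotential, sum_pair hxy, hw, add_comm]

end PairPotential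

noncomputable def cycleSine (n : ℕ) (d : Fin n) : ℝ := sin (π * d.val / n)

section CycleSine

variable {n : ℕ} [NeZero n]

@[simp]
theorem cycleSine_zero : cycleSine n 0 = 0 := by simp [cycleSine]

theorem cycleSine_pos {d : Fin n} (hd : d ≠ 0) : 0 < cycleSine n d := by
  have hd0 : (0 : ℝ) < d.val := by exact_mod_cast Nat.pos_of_ne_zero (Fin.val_ne_zero_iff.mpr hd)
  have hdn : (d.val : ℝ) < n := by exact_mod_cast d.isLt
  apply sin_pos_of_pos_of_lt_pi (div_pos (mul_pos pi_pos hd0) (hd0.trans hdn))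
  rw [div_lt_iff₀ (hd0.trans hdn)]
  nlinarith [pi_pos]

theorem cycleSine_sub_one_add_cycleSine_add_one {d : Fin n} (hd : d ≠ 0) :
    cycleSine n (d - 1) + cycleSine n (d + 1) = 2 * cos (π / n) * cycleSine n d := by
  have hn : (n : ℝ) ≠ 0 := Nat.cast_ne_zero.mpr (NeZero.ne n)
  have hd1 : 1 ≤ d.val := Nat.pos_of_ne_zero (Fin.val_ne_zero_iff.mpr hd)
  have hsub : ((d - 1 : Fin n).val : ℝ) = d.val - 1 := by
    rw [Fin.val_sub_one_of_ne_zero hd, Nat.cast_sub hd1, Nat.cast_one]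
  -- at `d = -1` the wrap-around `d + 1 = 0` is harmless because `sin (π * n / n) = 0` too
  have hadd : sin (π * (d + 1 : Fin n).val / n) = sin (π * (d.val + 1) / n) := by
    rcases (show d.val + 1 ≤ n from d.isLt).lt_or_eq with hlt | heq
    · rw [Fin.val_add_one_of_lt' hlt, Nat.cast_add_one]
    · have h0 : d + 1 = 0 := by
        rw [Fin.ext_iff, Fin.val_add, Fin.val_one', Nat.add_mod_mod, heq, Nat.mod_self,
          Fin.val_zero]
      rw [h0, Fin.val_zero, Nat.cast_zero, mul_zero, zero_div, sin_zero, ← Nat.cast_add_one, heq,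
        mul_div_cancel_right₀ _ hn, sin_pi]
  rw [cycleSine, cycleSine, cycleSine, hsub, hadd,
    show π * (d.val - 1) / n = π * d.val / n - π / n by ring,
    show π * (d.val + 1) / n = π * d.val / n + π / n by ring, sin_sub, sin_add]
  ring

end CycleSine

theorem SimpleGraph.cycleGraph_sum_neighborFinset {n : ℕ} (f : Fin (n + 3) → ℝ) (d : Fin (n + 3)) :
    ∑ b ∈ (cycleGraph (n + 3)).neighborFinset d, f b = f (d - 1) + f (d + 1) := by
  refine (cycleGraph_neighborFinset (n := n + 1)).symm ▸ sum_pair fun h => ?_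
  have := congrArg Fin.val (add_left_cancel (h.symm.trans (sub_eq_add_neg d 1)))
  simp [Fin.val_neg'] at this

theorem SimpleGraph.pathGraph_adj_iff_cycleGraph_adj_succ {m : ℕ} {i j : Fin m} :
    (pathGraph m).Adj i j ↔ (cycleGraph (m + 1)).Adj i.succ j.succ := by
  have hsub : ∀ a b : Fin m, ((a.succ - b.succ : Fin (m + 1)) : ℕ) =
      if b ≤ a then a.val - b.val else m + 1 + a.val - b.val := by
    intro a b
    split_ifs with h
    · rw [Fin.sub_val_of_le (Fin.succ_le_succ_iff.mpr h), Fin.val_succ, Fin.val_succ]; omega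
    · rw [Fin.coe_sub_iff_lt.mpr (Fin.succ_lt_succ_iff.mpr (not_le.mp h)), Fin.val_succ,
        Fin.val_succ]; omega
  simp only [pathGraph_adj, cycleGraph_adj', hsub, Fin.le_iff_val_le_val]
  have := i.isLt
  have := j.isLt
  split_ifs <;> omega

theorem SimpleGraph.pathGraph_adjMatrix_mulVec_comp_succ {m : ℕ} {w : Fin (m + 1) → ℝ} (hw : w 0 = 0) :
    (pathGraph m).adjMatrix ℝ *ᵥ (w ∘ Fin.succ) =
      ((cycleGraph (m + 1)).adjMatrix ℝ *ᵥ w) ∘ Fin.succ := by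
  ext i
  simp only [Function.comp_apply, mulVec, dotProduct, Fin.sum_univ_succ (n := m), adjMatrix_apply,
    pathGraph_adj_iff_cycleGraph_adj_succ, hw, mul_zero, zero_add]

theorem specRad_pathGraph {n : ℕ} :
    specRad ((pathGraph (n + 2)).adjMatrix ℝ) = 2 * cos (π / (n + 3 : ℕ)) := by
  refine specRad_eq_of_pos_eigenvector (adjMatrix_nonneg _) (f := cycleSine (n + 3) ∘ Fin.succ)
    (fun i => cycleSine_pos (Fin.succ_ne_zero i)) ?_
  rw [pathGraph_adjMatrix_mulVec_comp_succ cycleSine_zero]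
  ext i
  simp only [Function.comp_apply, adjMatrix_mulVec_apply, cycleGraph_sum_neighborFinset,
    cycleSine_sub_one_add_cycleSine_add_one (Fin.succ_ne_zero i), Pi.smul_apply, smul_eq_mul]

open Fin.CommRing in
theorem tokenGraph_cycleGraph_adjMatrix_mulVec_pairPotential {n : ℕ} :
    (tokenGraph (cycleGraph (n + 3)) 2).adjMatrix ℝ *ᵥ
        (fun A => pairPotential (cycleSine (n + 3)) A.1) =
      (4 * cos (π / (n + 3 : ℕ))) • fun A => pairPotential (cycleSine (n + 3)) A.1 := by
  ext A
  obtain ⟨i, j, hij, hA⟩ := card_eq_two.mp A.2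
  have hd : j - i ≠ 0 := sub_ne_zero.mpr hij.symm
  have h₁ := cycleSine_sub_one_add_cycleSine_add_one hd
  have h₂ := cycleSine_sub_one_add_cycleSine_add_one (neg_ne_zero.mpr hd)
  rw [tokenGraph_two_adjMatrix_mulVec_apply (pairPotential_singleton cycleSine_zero) hij hA,
    cycleGraph_sum_neighborFinset, cycleGraph_sum_neighborFinset, Pi.smul_apply, hA]
  simp only [pairPotential_pair (cycleSine_zero (n := n + 3)), smul_eq_mul]
  ring_nf at h₁ h₂ ⊢
  linarith

theorem specRad_tokenGraph_two_cycleGraph {n : ℕ} :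
    specRad ((tokenGraph (cycleGraph (n + 3)) 2).adjMatrix ℝ) = 4 * cos (π / (n + 3 : ℕ)) := by
  have : Nonempty {s : Finset (Fin (n + 3)) // s.card = 2} := ⟨⟨{0, 1}, card_pair zero_ne_one⟩⟩
  refine specRad_eq_of_pos_eigenvector (adjMatrix_nonneg _) (fun A => ?_)
    tokenGraph_cycleGraph_adjMatrix_mulVec_pairPotential
  obtain ⟨i, j, hij, hA⟩ := card_eq_two.mp A.2
  rw [hA, pairPotential_pair cycleSine_zero]
  exact add_pos (cycleSine_pos (sub_ne_zero.mpr hij.symm)) (cycleSine_pos (sub_ne_zero.mpr hij))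

theorem two_token_cycle_spectral_radius (n : ℕ) (hn : 3 ≤ n) :
    specRad ((tokenGraph (SimpleGraph.cycleGraph n) 2).adjMatrix ℝ) =
      4 * Real.cos (Real.pi / n) ∧
    specRad ((tokenGraph (SimpleGraph.cycleGraph n) 2).adjMatrix ℝ) =
      2 * specRad ((SimpleGraph.pathGraph (n - 1)).adjMatrix ℝ) := by
  obtain ⟨m, rfl⟩ := Nat.exists_eq_add_of_le' hn
  refine ⟨specRad_tokenGraph_two_cycleGraph, ?_⟩
  rw [specRad_tokenGraph_two_cycleGraph, show m + 3 - 1 = m + 2 from rfl, specRad_pathGraph]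
  ring
end
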